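/- Fix nonzero integers h, k with h + k ≠ 0, set c = h + k and d = h − k, and for u ∈ [0,1] let z_u(t) = u·exp(iπct/2) + √(1−u²)·exp(−iπct/2) and w_u(t) = exp(iπdt/2). Then the curve γ_u(t) = (2/π)·( (u√(1−u²)/(h+k))·sin((h+k)πt), −(u/k)·cos(kπt) + (√(1−u²)/h)·cos(hπt), (u/k)·sin(kπt) + (√(1−u²)/h)·sin(hπt) ) satisfies γ_u′(t) = ( |z_u(t)|² − |w_u(t)|², 2·Im(z_u(t)·conj(w_u(t))), 2·Re(z_u(t)·conj(w_u(t))) ) for all t; that is, γ_u is, up to translation, the base curve of the frame-Hopf framed curve of (z_u, w_u). -/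

import Mathlib

/-! Put `θ = πct/2` and `φ = πdt/2`, so that `z_u = u e^{iθ} + v e^{-iθ}` with `v = √(1-u²)` and
`w_u = e^{iφ}`. Since `u² + v² = 1` and `|w_u| = 1`, the first entry is
`|z_u|² - |w_u|² = 2uv cos 2θ`, while `z_u · conj w_u = u e^{i(θ-φ)} + v e^{-i(θ+φ)}`; here
`2θ = cπt`, `θ - φ = kπt` and `θ + φ = hπt`. Each coordinate of `γ_u` is then an antiderivative,
obtained by dividing by `cπ`, `kπ` and `hπ`, of the corresponding entry. -/

open scoped ComplexConjugate

noncomputable section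

/-- The explicit curve `γ_u` of the one-parameter family of critical framed curves,
for parameters `h, k` and `u ∈ [0,1]`. -/
def gammaU (h k : ℤ) (u : ℝ) (t : ℝ) : EuclideanSpace ℝ (Fin 3) :=
  WithLp.toLp 2 ![(2 / Real.pi) * (u * Real.sqrt (1 - u ^ 2) / ((h : ℝ) + (k : ℝ)) *
      Real.sin (((h : ℝ) + (k : ℝ)) * Real.pi * t)),
    (2 / Real.pi) * (-(u / (k : ℝ)) * Real.cos ((k : ℝ) * Real.pi * t) +
      Real.sqrt (1 - u ^ 2) / (h : ℝ) * Real.cos ((h : ℝ) * Real.pi * t)),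
    (2 / Real.pi) * ((u / (k : ℝ)) * Real.sin ((k : ℝ) * Real.pi * t) +
      Real.sqrt (1 - u ^ 2) / (h : ℝ) * Real.sin ((h : ℝ) * Real.pi * t))]

open Real

theorem HasDerivAt.toLp {𝕜 ι : Type*} [NontriviallyNormedField 𝕜] [Fintype ι]
    {E : ι → Type*} [∀ i, NormedAddCommGroup (E i)] [∀ i, NormedSpace 𝕜 (E i)]
    (p : ENNReal) [Fact (1 ≤ p)] {φ : 𝕜 → ∀ i, E i} {φ' : ∀ i, E i} {x : 𝕜}
    (hφ : HasDerivAt φ φ' x) :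
    HasDerivAt (fun t => WithLp.toLp p (φ t)) (WithLp.toLp p φ') x :=
  (PiLp.hasFDerivAt_toLp p (φ x)).comp_hasDerivAt x hφ

theorem hasDerivAt_gammaU {h k : ℤ} (hh : h ≠ 0) (hk : k ≠ 0) (hhk : h + k ≠ 0) (u t : ℝ) :
    HasDerivAt (gammaU h k u)
      (WithLp.toLp 2 ![2 * u * √(1 - u ^ 2) * cos ((h + k) * π * t),
        2 * (u * sin (k * π * t) - √(1 - u ^ 2) * sin (h * π * t)),
        2 * (u * cos (k * π * t) + √(1 - u ^ 2) * cos (h * π * t))]) t := by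
  have hh : (h : ℝ) ≠ 0 := by exact_mod_cast hh
  have hk : (k : ℝ) ≠ 0 := by exact_mod_cast hk
  have hhk : (h + k : ℝ) ≠ 0 := by exact_mod_cast hhk
  have hπ := pi_ne_zero
  have hlin (ω : ℝ) : HasDerivAt (fun t => ω * t) ω t := by
    simpa using (hasDerivAt_id' t).const_mul ω
  refine HasDerivAt.toLp 2 <| .finCons ?_ <| .finCons ?_ <| .finCons ?_ <|
    (hasDerivAt_const t ![]).congr_deriv (Subsingleton.elim _ _)
  · refine (((hlin _).sin.const_mul _).const_mul _).congr_deriv ?_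
    field_simp
  · refine ((((hlin _).cos.const_mul _).add ((hlin _).cos.const_mul _)).const_mul _).congr_deriv ?_
    field_simp
    ring
  · refine ((((hlin _).sin.const_mul _).add ((hlin _).sin.const_mul _)).const_mul _).congr_deriv ?_
    field_simp

section ExpIdentities

open Complex

variable (a b θ φ : ℝ)

theorem exp_neg_ofReal_mul_I : exp (-(θ * I)) = exp ((-θ : ℝ) * I) := by
  push_cast
  ring_nf

theorem conj_exp_ofReal_mul_I : conj (exp (θ * I)) = exp ((-θ : ℝ) * I) := by
  rw [← exp_conj, map_mul, conj_ofReal, conj_I, ← exp_neg_ofReal_mul_I, mul_neg]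

theorem sq_norm_add_exp_neg :
    ‖(a : ℂ) * exp (θ * I) + b * exp (-(θ * I))‖ ^ 2 =
      a ^ 2 + b ^ 2 + 2 * a * b * Real.cos (2 * θ) := by
  rw [Complex.sq_norm, normSq_apply, exp_neg_ofReal_mul_I]
  simp only [add_re, add_im, re_ofReal_mul, im_ofReal_mul, exp_ofReal_mul_I_re,
    exp_ofReal_mul_I_im, Real.cos_neg, Real.sin_neg, Real.cos_two_mul]
  linear_combination (a - b) ^ 2 * Real.sin_sq_add_cos_sq θ

theorem re_add_exp_neg_mul_conj_exp :
    (((a : ℂ) * exp (θ * I) + b * exp (-(θ * I))) * conj (exp (φ * I))).re =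
      a * Real.cos (θ - φ) + b * Real.cos (θ + φ) := by
  rw [exp_neg_ofReal_mul_I, conj_exp_ofReal_mul_I]
  simp only [mul_re, mul_im, add_re, add_im, ofReal_re, ofReal_im, exp_ofReal_mul_I_re,
    exp_ofReal_mul_I_im, Real.cos_neg, Real.sin_neg, Real.cos_sub, Real.cos_add]
  ring

theorem im_add_exp_neg_mul_conj_exp :
    (((a : ℂ) * exp (θ * I) + b * exp (-(θ * I))) * conj (exp (φ * I))).im =
      a * Real.sin (θ - φ) - b * Real.sin (θ + φ) := by
  rw [exp_neg_ofReal_mul_I, conj_exp_ofReal_mul_I]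
  simp only [mul_re, mul_im, add_re, add_im, ofReal_re, ofReal_im, exp_ofReal_mul_I_re,
    exp_ofReal_mul_I_im, Real.cos_neg, Real.sin_neg, Real.sin_sub, Real.sin_add]
  ring

end ExpIdentities

/-- With `c = h + k`, `d = h − k`, `z_u(t) = u·exp(iπct/2) + √(1−u²)·exp(−iπct/2)` and
`w_u(t) = exp(iπdt/2)`, the explicit curve `γ_u` satisfies
`γ_u'(t) = (|z_u|² − |w_u|², 2·Im(z_u·conj w_u), 2·Re(z_u·conj w_u))`; that is, `γ_u`
is, up to translation, the base curve of the frame-Hopf framed curve of `(z_u, w_u)`. -/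
theorem gammaU_is_base_curve
    (h k : ℤ) (hh : h ≠ 0) (hk : k ≠ 0) (hhk : h + k ≠ 0)
    (u : ℝ) (hu : u ∈ Set.Icc (0 : ℝ) 1)
    (zu wu : ℝ → ℂ)
    (hzu : zu = fun t : ℝ => (u : ℂ) *
        Complex.exp (Complex.I * Real.pi * ((h : ℂ) + (k : ℂ)) * t / 2) +
      (Real.sqrt (1 - u ^ 2) : ℂ) *
        Complex.exp (-(Complex.I * Real.pi * ((h : ℂ) + (k : ℂ)) * t / 2)))
    (hwu : wu = fun t : ℝ =>
      Complex.exp (Complex.I * Real.pi * ((h : ℂ) - (k : ℂ)) * t / 2)) :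
    ∀ t : ℝ, HasDerivAt (gammaU h k u)
      (WithLp.toLp 2 ![‖zu t‖ ^ 2 - ‖wu t‖ ^ 2,
         2 * (zu t * conj (wu t)).im,
         2 * (zu t * conj (wu t)).re]) t := by
  intro t
  have hv : u ^ 2 + √(1 - u ^ 2) ^ 2 = 1 := by
    rw [sq_sqrt (by nlinarith [hu.1, hu.2])]
    ring
  set θ : ℝ := π * (h + k) * t / 2
  set φ : ℝ := π * (h - k) * t / 2
  have hθ : Complex.I * π * ((h : ℂ) + k) * t / 2 = θ * Complex.I := by
    push_cast [θ]
    ring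
  have hφ : Complex.I * π * ((h : ℂ) - k) * t / 2 = φ * Complex.I := by
    push_cast [φ]
    ring
  have h2θ : 2 * θ = (h + k) * π * t := by ring
  have hθ_sub_φ : θ - φ = k * π * t := by ring
  have hθ_add_φ : θ + φ = h * π * t := by ring
  rw [hzu, hwu]
  dsimp only
  rw [hθ, hφ, Complex.norm_exp_ofReal_mul_I, sq_norm_add_exp_neg, re_add_exp_neg_mul_conj_exp,
    im_add_exp_neg_mul_conj_exp, hv, h2θ, hθ_sub_φ, hθ_add_φ, one_pow, add_sub_cancel_left]
  exact hasDerivAt_gammaU hh hk hhk u t
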